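/- arXiv:2511.03009 — 3 statements merged into one kernel-verified Lean document; each statement's English description precedes it below -/
import Mathlib

section
/- Let s ∈ ℂ with Re(s) > 1. For each q ∈ (0,1) and each integer r ≥ 1 let α_r(s,q) ∈ ℂ be given. Suppose there exist a bounded function χ : ℕ → ℂ and constants C > 0 and σ > Re(s) such that: (i) for every r ≥ 1, α_r(s,q) → χ(r)/r^s as q → 1⁻; and (ii) |α_r(s,q)| ≤ C r^{-σ} for all q ∈ (0,1) and all r ≥ 1. For n ≥ 1 define β_n(s,q) = Σ_{r=1}^{n} q^r α_r(s,q) / ((q;q)_{n-r} (q;q)_{n+r}) and T_n(s,q) = √n · (2n)! · (1-q)^{2n} · β_n(s,q) / 4^n. Then for each n the limit A_n(s) := lim_{q→1⁻} T_n(s,q) exists, and lim_{n→∞} A_n(s) = L(s,χ)/√π, where L(s,χ) := Σ_{r=1}^{∞} χ(r)/r^s. -/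
open Finset Filter Topology

/-- `(q;q)_m = ∏_{j=1}^m (1 - q^j)`. -/
noncomputable def qPoch (q : ℝ) (m : ℕ) : ℝ := ∏ j ∈ Finset.range m, (1 - q ^ (j + 1))

/-- `β_n(s,q) = Σ_{r=1}^{n} q^r α_r(s,q) / ((q;q)_{n-r} (q;q)_{n+r})`. -/
noncomputable def betaSeq (α : ℕ → ℝ → ℂ) (n : ℕ) (q : ℝ) : ℂ :=
  ∑ r ∈ Finset.Icc 1 n,
    (q : ℂ) ^ r * α r q / ((qPoch q (n - r) : ℂ) * (qPoch q (n + r) : ℂ))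

/-- `T_n(s,q) = √n (2n)! (1-q)^{2n} β_n(s,q) / 4^n`. -/
noncomputable def Tseq (α : ℕ → ℝ → ℂ) (n : ℕ) (q : ℝ) : ℂ :=
  (Real.sqrt n : ℂ) * ((2 * n).factorial : ℂ) * ((1 : ℂ) - (q : ℂ)) ^ (2 * n)
    * betaSeq α n q / 4 ^ n

/-!
Since `(q;q)_m = (1 - q)^m [m]_q!`, the factor `(1 - q)^{2n}` cancels and `T_n(s,q)` is a finite
sum `∑_{r=1}^n w_n(r,q) α_r(s,q)` whose weights are continuous at `q = 1`, where they become
`w_n(r) = √n C(2n, n+r) / 4^n`; so `A_n(s) = ∑_{r=1}^n w_n(r) χ(r) / r^s`. By Stirling's formula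
`w_n(0) → 1/√π`, and `w_n(r+1) / w_n(r) = (n-r)/(n+r+1) → 1`, so `w_n(r) → 1/√π` for every `r`,
while `w_n(r) ≤ w_n(0)` is bounded uniformly. As `χ` is bounded and `Re s > 1`, Tannery's theorem
(dominated convergence for series) gives the limit `L(s,χ)/√π`.
-/

open Nat Real

noncomputable def qFactorial (q : ℝ) (m : ℕ) : ℝ := ∏ j ∈ range m, ∑ i ∈ range (j + 1), q ^ i

lemma qPoch_eq_mul_qFactorial (q : ℝ) (m : ℕ) : qPoch q m = (1 - q) ^ m * qFactorial q m := by
  rw [qPoch, qFactorial, pow_eq_prod_const, ← prod_mul_distrib]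
  exact prod_congr rfl fun j _ => by rw [← geom_sum_mul_neg q (j + 1), mul_comm]

lemma qFactorial_pos {q : ℝ} (hq : 0 ≤ q) (m : ℕ) : 0 < qFactorial q m :=
  prod_pos fun j _ => sum_pos' (fun i _ => by positivity) ⟨0, by simp, by simp⟩

@[fun_prop]
lemma continuous_qFactorial (m : ℕ) : Continuous (qFactorial · m) := by
  unfold qFactorial; fun_prop

lemma qFactorial_one (m : ℕ) : qFactorial 1 m = m ! := by
  simp only [qFactorial, one_pow, sum_const, card_range, nsmul_one]
  exact_mod_cast prod_range_add_one_eq_factorial m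

noncomputable def binomWeight (n k : ℕ) : ℝ := √n * (2 * n).choose (n + k) / 4 ^ n

lemma binomWeight_nonneg (n k : ℕ) : 0 ≤ binomWeight n k := by
  unfold binomWeight; positivity

lemma binomWeight_le_binomWeight_zero (n k : ℕ) : binomWeight n k ≤ binomWeight n 0 := by
  have h := Nat.choose_le_middle (n + k) (2 * n)
  rw [Nat.mul_div_cancel_left n two_pos] at h
  unfold binomWeight
  gcongr
  exact_mod_cast h

lemma binomWeight_zero_eq_stirlingSeq {n : ℕ} (hn : n ≠ 0) :
    binomWeight n 0 = Stirling.stirlingSeq (2 * n) / Stirling.stirlingSeq n ^ 2 := by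
  have h4 : √(2 * (2 * n : ℕ) : ℝ) = 2 * √n := by
    push_cast
    rw [show (2 : ℝ) * (2 * n) = 2 ^ 2 * n by ring, sqrt_mul (by positivity), sqrt_sq two_pos.le]
  simp only [binomWeight, Stirling.stirlingSeq, add_zero, h4]
  rw [Nat.cast_choose ℝ (by omega : n ≤ 2 * n), show 2 * n - n = n by omega]
  have hn' : (0 : ℝ) < n := by positivity
  push_cast
  simp [field, pow_mul, mul_pow, div_pow, sq_sqrt hn'.le, ← exp_nat_mul]
  ring_nf

lemma tendsto_binomWeight_zero : Tendsto (binomWeight · 0) atTop (𝓝 (√π)⁻¹) := by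
  have hS := Stirling.tendsto_stirlingSeq_sqrt_pi
  have h := (hS.comp (tendsto_id.const_mul_atTop' two_pos)).div (hS.pow 2) (by positivity)
  rw [sq, div_mul_cancel_right₀ (by positivity)] at h
  refine h.congr' ?_
  filter_upwards [eventually_ne_atTop 0] with n hn
  exact (binomWeight_zero_eq_stirlingSeq hn).symm

lemma binomWeight_succ_mul {n k : ℕ} (hk : k ≤ n) :
    binomWeight n (k + 1) * (n + k + 1) = binomWeight n k * (n - k) := by
  have h := Nat.choose_succ_right_eq (2 * n) (n + k)
  rw [show 2 * n - (n + k) = n - k by omega] at h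
  have h' : ((2 * n).choose (n + k + 1) : ℝ) * (n + k + 1) = (2 * n).choose (n + k) * (n - k) := by
    exact_mod_cast h
  simp only [binomWeight, ← add_assoc, div_mul_eq_mul_div, mul_assoc, h']

lemma tendsto_binomWeight (k : ℕ) : Tendsto (binomWeight · k) atTop (𝓝 (√π)⁻¹) := by
  induction k with
  | zero => exact tendsto_binomWeight_zero
  | succ k ih =>
    have hratio : Tendsto (fun n : ℕ => ((n : ℝ) - k) / (n + k + 1)) atTop (𝓝 1) := by
      convert tendsto_add_mul_div_add_mul_atTop_nhds (-(k : ℝ)) (k + 1) 1 one_ne_zero using 2 <;>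
        ring
    rw [← mul_one (√π)⁻¹]
    refine (ih.mul hratio).congr' ?_
    filter_upwards [eventually_ge_atTop k] with n hn
    rw [mul_div_assoc', ← binomWeight_succ_mul hn, mul_div_cancel_right₀ _ (by positivity)]

noncomputable def qWeight (n r : ℕ) (q : ℝ) : ℝ :=
  √n * (2 * n)! * q ^ r / (4 ^ n * qFactorial q (n - r) * qFactorial q (n + r))

lemma Tseq_eq_sum_qWeight_smul (α : ℕ → ℝ → ℂ) (n : ℕ) {q : ℝ} (hq0 : 0 ≤ q) (hq1 : q ≠ 1) :
    Tseq α n q = ∑ r ∈ Icc 1 n, qWeight n r q • α r q := by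
  rw [Tseq, betaSeq, mul_sum, sum_div]
  refine sum_congr rfl fun r hr => ?_
  have hpow : (1 - q : ℂ) ^ (2 * n) = (1 - q) ^ (n - r) * (1 - q) ^ (n + r) := by
    rw [← pow_add]; congr 1; have := (mem_Icc.1 hr).2; omega
  have h1 : (1 - q : ℂ) ≠ 0 := sub_ne_zero.2 (mod_cast hq1.symm)
  have h2 : (qFactorial q (n - r) : ℂ) ≠ 0 := mod_cast (qFactorial_pos hq0 (n - r)).ne'
  have h3 : (qFactorial q (n + r) : ℂ) ≠ 0 := mod_cast (qFactorial_pos hq0 (n + r)).ne'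
  rw [qWeight, qPoch_eq_mul_qFactorial, qPoch_eq_mul_qFactorial, Complex.real_smul]
  push_cast
  rw [hpow]
  field_simp

lemma continuousAt_qWeight (n r : ℕ) : ContinuousAt (qWeight n r) 1 := by
  have h1 := qFactorial_pos zero_le_one (n - r)
  have h2 := qFactorial_pos zero_le_one (n + r)
  exact (by fun_prop : Continuous fun q : ℝ => √n * (2 * n)! * q ^ r).continuousAt.div
    (by fun_prop) (by positivity)

lemma qWeight_one {n r : ℕ} (hr : r ≤ n) : qWeight n r 1 = binomWeight n r := by
  rw [qWeight, binomWeight, qFactorial_one, qFactorial_one,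
    Nat.cast_choose ℝ (by omega : n + r ≤ 2 * n), show 2 * n - (n + r) = n - r by omega]
  simp [field]

lemma tendsto_Tseq {α : ℕ → ℝ → ℂ} {a : ℕ → ℂ} {n : ℕ}
    (h : ∀ r ∈ Icc 1 n, Tendsto (α r) (𝓝[Set.Ioo 0 1] 1) (𝓝 (a r))) :
    Tendsto (Tseq α n) (𝓝[Set.Ioo 0 1] 1) (𝓝 (∑ r ∈ Icc 1 n, binomWeight n r • a r)) := by
  have hterm (r : ℕ) (hr : r ∈ Icc 1 n) :
      Tendsto (fun q => qWeight n r q • α r q) (𝓝[Set.Ioo 0 1] 1) (𝓝 (binomWeight n r • a r)) := by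
    rw [← qWeight_one (mem_Icc.1 hr).2]
    exact ((continuousAt_qWeight n r).tendsto.mono_left nhdsWithin_le_nhds).smul (h r hr)
  refine (tendsto_finsetSum _ hterm).congr' ?_
  filter_upwards [self_mem_nhdsWithin] with q hq
  exact (Tseq_eq_sum_qWeight_smul α n hq.1.le hq.2.ne).symm

lemma exists_binomWeight_le : ∃ M, ∀ n k, binomWeight n k ≤ M := by
  obtain ⟨M, hM⟩ := tendsto_binomWeight_zero.bddAbove_range
  exact ⟨M, fun n k => (binomWeight_le_binomWeight_zero n k).trans (hM ⟨n, rfl⟩)⟩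

lemma tendsto_sum_range_smul_of_summable {E : Type*} [NormedAddCommGroup E] [NormedSpace ℝ E]
    [CompleteSpace E] {w : ℕ → ℕ → ℝ} {c : ℕ → E} {L M : ℝ} (hc : Summable (‖c ·‖))
    (hw : ∀ n r, r < n → |w n r| ≤ M) (hlim : ∀ r, Tendsto (w · r) atTop (𝓝 L)) :
    Tendsto (fun n => ∑ r ∈ range n, w n r • c r) atTop (𝓝 (L • ∑' r, c r)) := by
  let f (n r : ℕ) : E := if r < n then w n r • c r else 0
  have hf (n : ℕ) : ∑' r, f n r = ∑ r ∈ range n, w n r • c r := by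
    rw [tsum_eq_sum (s := range n) fun r hr => if_neg (by simpa using hr)]
    exact sum_congr rfl fun r hr => if_pos (mem_range.1 hr)
  have hf_lim (r : ℕ) : Tendsto (f · r) atTop (𝓝 (L • c r)) := by
    refine ((hlim r).smul_const (c r)).congr' ?_
    filter_upwards [eventually_gt_atTop r] with n hn
    exact (if_pos hn).symm
  have hf_le (n r : ℕ) : ‖f n r‖ ≤ M * ‖c r‖ := by
    by_cases hr : r < n
    · simpa [f, hr, norm_smul] using mul_le_mul_of_nonneg_right (hw n r hr) (norm_nonneg (c r))
    · simpa [f, hr] using mul_nonneg ((abs_nonneg _).trans (hw (r + 1) r r.lt_succ_self))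
        (norm_nonneg (c r))
  rw [← tsum_const_smul'']
  simpa only [hf] using tendsto_tsum_of_dominated_convergence (hc.mul_left M) hf_lim
    (.of_forall hf_le)

lemma summable_norm_div_succ_cpow {χ : ℕ → ℂ} {B : ℝ} (hχ : ∀ r, ‖χ r‖ ≤ B) {s : ℂ}
    (hs : 1 < s.re) : Summable fun r : ℕ => ‖χ (r + 1) / ((r + 1 : ℕ) : ℂ) ^ s‖ := by
  have hp : Summable fun r : ℕ => B * ((r + 1 : ℕ) : ℝ) ^ (-s.re) :=
    ((summable_nat_add_iff 1).2 (Real.summable_nat_rpow.2 (by linarith))).mul_left B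
  refine hp.of_nonneg_of_le (fun _ => norm_nonneg _) fun r => ?_
  rw [norm_div, Complex.norm_natCast_cpow_of_pos r.succ_pos, Real.rpow_neg (by positivity),
    div_eq_mul_inv]
  exact mul_le_mul_of_nonneg_right (hχ _) (by positivity)

theorem generalized_bailey_zeta_general (s : ℂ) (hs : 1 < s.re)
    (α : ℕ → ℝ → ℂ) (χ : ℕ → ℂ) (B : ℝ) (hχ : ∀ r : ℕ, ‖χ r‖ ≤ B)
    (hlim : ∀ r : ℕ, 1 ≤ r →
      Tendsto (fun q : ℝ => α r q) (𝓝[Set.Ioo (0 : ℝ) 1] 1) (𝓝 (χ r / (r : ℂ) ^ s))) :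
    ∃ A : ℕ → ℂ,
      (∀ n : ℕ, 1 ≤ n →
        Tendsto (fun q : ℝ => Tseq α n q) (𝓝[Set.Ioo (0 : ℝ) 1] 1) (𝓝 (A n))) ∧
      Tendsto A atTop
        (𝓝 ((∑' r : ℕ, χ (r + 1) / ((r + 1 : ℕ) : ℂ) ^ s) / (Real.sqrt Real.pi : ℂ))) := by
  refine ⟨fun n => ∑ r ∈ Icc 1 n, binomWeight n r • (χ r / (r : ℂ) ^ s),
    fun n _ => tendsto_Tseq fun r hr => hlim r (mem_Icc.1 hr).1, ?_⟩
  obtain ⟨M, hM⟩ := exists_binomWeight_le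
  have hsum := tendsto_sum_range_smul_of_summable (summable_norm_div_succ_cpow hχ hs)
    (fun n r _ => (abs_of_nonneg (binomWeight_nonneg n (r + 1))).trans_le (hM n (r + 1)))
    (fun r => tendsto_binomWeight (r + 1))
  rw [Complex.real_smul, Complex.ofReal_inv, inv_mul_eq_div] at hsum
  refine hsum.congr fun n => ?_
  rw [range_eq_Ico, sum_Ico_add' (fun r => binomWeight n r • (χ r / (r : ℂ) ^ s)), zero_add,
    Ico_add_one_right_eq_Icc]

/-- The generalized Bailey–Zeta limit theorem: under a pointwise limit hypothesis and a
uniform polynomial bound, the two-step limit of `T_n(s,q)` (first `q → 1⁻`, then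
`n → ∞`) exists and equals `L(s,χ)/√π`. -/
theorem generalized_bailey_zeta (s : ℂ) (hs : 1 < s.re)
    (α : ℕ → ℝ → ℂ) (χ : ℕ → ℂ) (B : ℝ) (hχ : ∀ r : ℕ, ‖χ r‖ ≤ B)
    (C : ℝ) (hC : 0 < C) (σ : ℝ) (hσ : s.re < σ)
    (hlim : ∀ r : ℕ, 1 ≤ r →
      Tendsto (fun q : ℝ => α r q) (𝓝[Set.Ioo (0 : ℝ) 1] 1) (𝓝 (χ r / (r : ℂ) ^ s)))
    (hbd : ∀ q ∈ Set.Ioo (0 : ℝ) 1, ∀ r : ℕ, 1 ≤ r → ‖α r q‖ ≤ C * (r : ℝ) ^ (-σ)) :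
    ∃ A : ℕ → ℂ,
      (∀ n : ℕ, 1 ≤ n →
        Tendsto (fun q : ℝ => Tseq α n q) (𝓝[Set.Ioo (0 : ℝ) 1] 1) (𝓝 (A n))) ∧
      Tendsto A atTop
        (𝓝 ((∑' r : ℕ, χ (r + 1) / ((r + 1 : ℕ) : ℂ) ^ s) / (Real.sqrt Real.pi : ℂ))) :=
  generalized_bailey_zeta_general s hs α χ B hχ hlim
end

section
/- Let s ∈ ℂ with Re(s) > 1 and let χ : ℕ → ℂ be a bounded function. Then lim_{n→∞} (√n / 4^n) Σ_{r=1}^{n} C(2n, n+r) χ(r) / r^s = (1/√π) Σ_{r=1}^{∞} χ(r) / r^s. -/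
/-!
Stirling's formula gives `√n · C(2n, n) / 4ⁿ → 1/√π`, and `C(2n, n+r+1) / C(2n, n+r) → 1` for
each fixed `r`, so every weight `√n · C(2n, n+r) / 4ⁿ` tends to `1/√π` while staying below the
central one, which is bounded. As `∑ χ(r)/rˢ` converges absolutely, Tannery's theorem (dominated
convergence for series) moves the limit inside the sum.
-/

open Finset Filter Topology Real Nat

theorem tendsto_sum_range_smul_of_tendsto {𝕜 E : Type*} [NormedField 𝕜] [NormedAddCommGroup E]
    [NormedSpace 𝕜 E] [CompleteSpace E] {a : ℕ → ℕ → 𝕜} {f : ℕ → E} {L : 𝕜} {M : ℝ}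
    (hf : Summable (‖f ·‖)) (ha_le : ∀ n k, ‖a n k‖ ≤ M) (ha : ∀ k, Tendsto (a · k) atTop (𝓝 L)) :
    Tendsto (fun n ↦ ∑ k ∈ range n, a n k • f k) atTop (𝓝 (L • ∑' k, f k)) := by
  have hterm (n : ℕ) : ∑ k ∈ range n, a n k • f k
      = ∑' k, if k < n then a n k • f k else 0 := by
    rw [tsum_eq_sum (s := range n) fun k hk ↦ if_neg (by simpa using hk)]
    exact sum_congr rfl fun k hk ↦ (if_pos (mem_range.mp hk)).symm
  simp_rw [hterm, ← tsum_const_smul'']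
  refine tendsto_tsum_of_dominated_convergence (hf.mul_left M) (fun k ↦ ?_)
    (.of_forall fun n k ↦ ?_)
  · refine ((ha k).smul_const (f k)).congr' ?_
    filter_upwards [eventually_gt_atTop k] with n hn
    rw [if_pos hn]
  · split_ifs
    · rw [norm_smul]
      exact mul_le_mul_of_nonneg_right (ha_le n k) (norm_nonneg _)
    · rw [norm_zero]
      exact mul_nonneg ((norm_nonneg _).trans (ha_le 0 0)) (norm_nonneg _)

theorem sqrt_div_four_pow_mul_centralBinom (n : ℕ) :
    √n / 4 ^ n * n.centralBinom = Stirling.stirlingSeq (2 * n) / Stirling.stirlingSeq n ^ 2 := by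
  have hfact : ((2 * n)! : ℝ) = n.centralBinom * n ! ^ 2 := by
    have := choose_mul_factorial_mul_factorial (by omega : n ≤ 2 * n)
    rw [show 2 * n - n = n by omega, ← centralBinom_eq_two_mul_choose] at this
    rw [← this]; push_cast; ring
  have hsqrt : √(2 * (2 * n : ℕ) : ℝ) = 2 * √n := by
    rw [show (2 * (2 * n : ℕ) : ℝ) = 2 ^ 2 * n by push_cast; ring, sqrt_mul (by norm_num),
      sqrt_sq (by norm_num)]
  have hpow : ((2 * n : ℕ) / exp 1 : ℝ) ^ (2 * n) = 4 ^ n * ((n / exp 1) ^ n) ^ 2 := by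
    rw [show (4 : ℝ) ^ n = 2 ^ (2 * n) by rw [pow_mul]; norm_num]; push_cast; ring
  simp only [Stirling.stirlingSeq, hfact, hsqrt, hpow, div_pow, mul_pow,
    sq_sqrt (by positivity : (0 : ℝ) ≤ 2 * n)]
  field_simp
  rw [mul_div_assoc, div_sqrt, mul_comm]

theorem tendsto_sqrt_div_four_pow_mul_centralBinom :
    Tendsto (fun n : ℕ ↦ √n / 4 ^ n * n.centralBinom) atTop (𝓝 (1 / √π)) := by
  have hlim : Tendsto (fun n ↦ Stirling.stirlingSeq (2 * n) / Stirling.stirlingSeq n ^ 2) atTop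
      (𝓝 (√π / √π ^ 2)) :=
    (Stirling.tendsto_stirlingSeq_sqrt_pi.comp (tendsto_id.const_mul_atTop' two_pos)).div
      (Stirling.tendsto_stirlingSeq_sqrt_pi.pow 2) (by positivity)
  rw [show √π / √π ^ 2 = 1 / √π by field_simp] at hlim
  exact hlim.congr fun n ↦ (sqrt_div_four_pow_mul_centralBinom n).symm

theorem cast_choose_two_mul_add_succ {n r : ℕ} (hr : r ≤ n) :
    ((2 * n).choose (n + (r + 1)) : ℝ) =
      (2 * n).choose (n + r) * (1 - (2 * r + 1) / (n + (r + 1) : ℕ)) := by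
  have h := choose_succ_right_eq (2 * n) (n + r)
  rw [show 2 * n - (n + r) = n - r by omega] at h
  have h' : ((2 * n).choose (n + (r + 1)) : ℝ) * (n + (r + 1) : ℕ) =
      (2 * n).choose (n + r) * (n - r : ℕ) := by
    exact_mod_cast h
  rw [cast_sub hr] at h'
  field_simp
  push_cast at h' ⊢
  linarith

theorem tendsto_sqrt_div_four_pow_mul_choose_add (r : ℕ) :
    Tendsto (fun n : ℕ ↦ √n / 4 ^ n * (2 * n).choose (n + r)) atTop (𝓝 (1 / √π)) := by
  induction r with
  | zero =>
    simpa [← centralBinom_eq_two_mul_choose] using tendsto_sqrt_div_four_pow_mul_centralBinom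
  | succ r ih =>
    have hratio : Tendsto (fun n : ℕ ↦ 1 - (2 * r + 1 : ℝ) / (n + (r + 1) : ℕ)) atTop (𝓝 1) := by
      simpa only [sub_zero, Function.comp_def] using tendsto_const_nhds.sub
        ((tendsto_const_div_atTop_nhds_zero_nat (2 * r + 1 : ℝ)).comp
          (tendsto_add_atTop_nat (r + 1)))
    simpa using (ih.mul hratio).congr' <| by
      filter_upwards [eventually_ge_atTop r] with n hn
      rw [mul_assoc, ← cast_choose_two_mul_add_succ hn]

theorem exists_sqrt_div_four_pow_mul_choose_le :
    ∃ M, ∀ n r : ℕ, √n / 4 ^ n * (2 * n).choose r ≤ M := by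
  obtain ⟨M, hM⟩ := tendsto_sqrt_div_four_pow_mul_centralBinom.bddAbove_range
  refine ⟨M, fun n r ↦ le_trans ?_ (hM ⟨n, rfl⟩)⟩
  dsimp only
  gcongr
  exact_mod_cast choose_le_centralBinom r n

theorem summable_norm_div_natCast_succ_cpow {χ : ℕ → ℂ} {B : ℝ} (hχ : ∀ r, ‖χ r‖ ≤ B) {s : ℂ}
    (hs : 1 < s.re) : Summable fun k : ℕ ↦ ‖χ (k + 1) / ((k + 1 : ℕ) : ℂ) ^ s‖ := by
  simpa [LSeries.term_of_ne_zero] using (summable_nat_add_iff 1).mpr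
    (LSeriesSummable_of_bounded_of_one_lt_re (fun n _ ↦ hχ n) hs).norm

/-- For `Re(s) > 1` and `χ` bounded,
`(√n/4^n) Σ_{r=1}^n C(2n,n+r) χ(r)/r^s → (1/√π) Σ_{r=1}^∞ χ(r)/r^s`. -/
theorem tendsto_sqrt_div_four_pow_mul_choose_sum (s : ℂ) (hs : 1 < s.re)
    (χ : ℕ → ℂ) (B : ℝ) (hχ : ∀ r : ℕ, ‖χ r‖ ≤ B) :
    Tendsto (fun n : ℕ =>
        ((Real.sqrt n / 4 ^ n : ℝ) : ℂ) *
          ∑ r ∈ Finset.Icc 1 n, ((2 * n).choose (n + r) : ℂ) * χ r / (r : ℂ) ^ s)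
      atTop
      (𝓝 ((1 / (Real.sqrt Real.pi : ℂ)) * ∑' r : ℕ, χ (r + 1) / ((r + 1 : ℕ) : ℂ) ^ s)) := by
  obtain ⟨M, hM⟩ := exists_sqrt_div_four_pow_mul_choose_le
  have hlim := tendsto_sum_range_smul_of_tendsto (summable_norm_div_natCast_succ_cpow hχ hs)
    (fun n k ↦ (Real.norm_of_nonneg (by positivity)).trans_le (hM n (n + (k + 1))))
    (fun k ↦ tendsto_sqrt_div_four_pow_mul_choose_add (k + 1))
  convert hlim using 2 with n
  · rw [← Ico_add_one_right_eq_Icc, sum_Ico_eq_sum_range, mul_sum]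
    refine sum_congr (by simp) fun k _ ↦ ?_
    rw [Complex.real_smul, add_comm 1 k]
    push_cast
    ring
  · rw [Complex.real_smul]
    push_cast
    rfl
end

section
/- Let s ∈ ℂ with Re(s) > 1. Then lim_{n→∞} √n · (2n)! / 4^n · Σ_{r=1}^{n} 1 / ((n-r)! (n+r)! r^s) = ζ(s)/√π, where ζ is the Riemann zeta function. -/
open Finset Filter Topology Real

/-!
For `r ≤ n` the weight `√n (2n)! / (4ⁿ (n-r)! (n+r)!)` is `√n C(2n, n+r) / 4ⁿ`. Stirling's formula
gives `√n C(2n, n) / 4ⁿ → 1/√π`, and for fixed `r` the ratio `C(2n, n+r) / C(2n, n)` is a product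
of `r` factors `(n-j)/(n+j+1) → 1`, so every weight tends to `1/√π`. As `C(2n, n+r) ≤ C(2n, n)`,
the weights are uniformly bounded, and Tannery's theorem passes the limit through the absolutely
convergent series `Σ r⁻ˢ`.
-/

lemma tendsto_tsum_smul_of_tendsto_of_abs_le {α β E : Type*} {𝓕 : Filter α}
    [NormedAddCommGroup E] [NormedSpace ℝ E] [CompleteSpace E]
    {a : α → β → ℝ} {c M : ℝ} {f : β → E} (hf : Summable (‖f ·‖))
    (ha : ∀ r, Tendsto (a · r) 𝓕 (𝓝 c)) (hM : ∀ n r, |a n r| ≤ M) :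
    Tendsto (fun n => ∑' r, a n r • f r) 𝓕 (𝓝 (c • ∑' r, f r)) := by
  rw [← tsum_const_smul'']
  refine tendsto_tsum_of_dominated_convergence (hf.mul_left M)
    (fun r => (ha r).smul_const (f r)) (.of_forall fun n r => ?_)
  rw [norm_smul, Real.norm_eq_abs]
  exact mul_le_mul_of_nonneg_right (hM n r) (norm_nonneg _)

open Stirling in
lemma sqrt_mul_centralBinom_div_four_pow_eq {n : ℕ} (hn : n ≠ 0) :
    √n * n.centralBinom / 4 ^ n = stirlingSeq (2 * n) / stirlingSeq n ^ 2 := by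
  have hcb : ((2 * n).factorial : ℝ) = n.centralBinom * n.factorial * n.factorial := by
    rw [Nat.centralBinom_eq_two_mul_choose, Nat.cast_choose ℝ (by omega),
      show 2 * n - n = n by omega]
    field_simp
  have h4 : (4 : ℝ) ^ n = 2 ^ (2 * n) := by rw [pow_mul]; norm_num
  simp only [stirlingSeq, hcb, h4, div_pow, mul_pow]
  push_cast
  rw [Real.sq_sqrt (by positivity), show √(2 * (2 * n : ℝ)) = 2 * √n by
    rw [← mul_assoc, Real.sqrt_mul (by norm_num), show (2 * 2 : ℝ) = 2 ^ 2 by norm_num,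
      Real.sqrt_sq (by norm_num)]]
  have hsqrt : (0 : ℝ) < √n := by positivity
  field_simp
  rw [Real.sq_sqrt (by positivity)]
  ring

lemma tendsto_sqrt_mul_centralBinom_div_four_pow :
    Tendsto (fun n : ℕ => √n * n.centralBinom / 4 ^ n) atTop (𝓝 (1 / √π)) := by
  have hlim := (Stirling.tendsto_stirlingSeq_sqrt_pi.comp
    (tendsto_id.const_mul_atTop' two_pos)).div (Stirling.tendsto_stirlingSeq_sqrt_pi.pow 2)
    (by positivity)
  rw [sq, ← div_div, div_self (by positivity)] at hlim
  refine hlim.congr' ?_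
  filter_upwards [eventually_ne_atTop 0] with n hn
  exact (sqrt_mul_centralBinom_div_four_pow_eq hn).symm

lemma tendsto_choose_two_mul_add_div_centralBinom (r : ℕ) :
    Tendsto (fun n : ℕ => ((2 * n).choose (n + r) : ℝ) / n.centralBinom) atTop (𝓝 1) := by
  induction r with
  | zero =>
    refine tendsto_const_nhds.congr fun n => ?_
    rw [add_zero, ← Nat.centralBinom_eq_two_mul_choose,
      div_self (Nat.cast_pos.mpr n.centralBinom_pos).ne']
  | succ r ih =>
    have hratio : Tendsto (fun n : ℕ => ((n : ℝ) - r) / (n + (r + 1))) atTop (𝓝 1) := by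
      simpa [sub_eq_neg_add, add_comm] using
        tendsto_add_mul_div_add_mul_atTop_nhds (-(r : ℝ)) (r + 1) 1 one_ne_zero
    have hprod := ih.mul hratio
    rw [mul_one] at hprod
    refine hprod.congr' ?_
    filter_upwards [eventually_ge_atTop r] with n hn
    have hstep := Nat.choose_succ_right_eq (2 * n) (n + r)
    rw [show 2 * n - (n + r) = n - r by omega] at hstep
    have hstep' : ((2 * n).choose (n + r + 1) : ℝ) * (n + r + 1) =
        (2 * n).choose (n + r) * (n - r) := by
      rw [← Nat.cast_sub hn]; exact_mod_cast hstep
    have hcb : (n.centralBinom : ℝ) ≠ 0 := (Nat.cast_pos.mpr n.centralBinom_pos).ne'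
    simp only [← add_assoc]
    field_simp
    linear_combination -hstep'

lemma tendsto_sqrt_mul_choose_two_mul_add_div_four_pow (r : ℕ) :
    Tendsto (fun n : ℕ => √n * (2 * n).choose (n + r) / 4 ^ n) atTop (𝓝 (1 / √π)) := by
  have hprod := tendsto_sqrt_mul_centralBinom_div_four_pow.mul
    (tendsto_choose_two_mul_add_div_centralBinom r)
  rw [mul_one] at hprod
  refine hprod.congr fun n => ?_
  field_simp [(Nat.cast_pos.mpr n.centralBinom_pos).ne']

lemma exists_abs_sqrt_mul_choose_two_mul_div_four_pow_le :
    ∃ M, ∀ n k : ℕ, |√n * (2 * n).choose k / 4 ^ n| ≤ M := by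
  obtain ⟨M, hM⟩ := tendsto_sqrt_mul_centralBinom_div_four_pow.bddAbove_range
  refine ⟨M, fun n k => ?_⟩
  rw [abs_of_nonneg (by positivity)]
  calc √n * (2 * n).choose k / 4 ^ n ≤ √n * n.centralBinom / 4 ^ n := by
        gcongr; exact_mod_cast Nat.choose_le_centralBinom k n
    _ ≤ M := hM ⟨n, rfl⟩

lemma sqrt_mul_factorial_div_four_pow_mul_sum_eq_tsum {s : ℂ} (hs : s ≠ 0) (n : ℕ) :
    ((√n : ℝ) : ℂ) * ((2 * n).factorial : ℂ) / 4 ^ n *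
        ∑ r ∈ Icc 1 n, 1 / (((n - r).factorial : ℂ) * ((n + r).factorial : ℂ) * (r : ℂ) ^ s) =
      ∑' r : ℕ, (√n * (2 * n).choose (n + r) / 4 ^ n) • (1 / (r : ℂ) ^ s) := by
  rw [tsum_eq_sum (s := Icc 1 n), mul_sum]
  · refine sum_congr rfl fun r hr => ?_
    have hrn : n + r ≤ 2 * n := by grind
    rw [Complex.real_smul, Nat.cast_choose ℝ hrn, show 2 * n - (n + r) = n - r by omega]
    push_cast
    ring
  · intro r hr
    rcases Nat.eq_zero_or_pos r with rfl | hr0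
    · simp [Complex.zero_cpow hs]
    · rw [Nat.choose_eq_zero_of_lt (by grind), Nat.cast_zero, mul_zero, zero_div,
        zero_smul]

/-- For `Re(s) > 1`, `√n (2n)!/4^n · Σ_{r=1}^n 1/((n-r)!(n+r)! r^s) → ζ(s)/√π`. -/
theorem tendsto_factorial_weighted_zeta_sum (s : ℂ) (hs : 1 < s.re) :
    Tendsto (fun n : ℕ =>
        ((Real.sqrt n : ℝ) : ℂ) * ((2 * n).factorial : ℂ) / 4 ^ n *
          ∑ r ∈ Finset.Icc 1 n,
            1 / (((n - r).factorial : ℂ) * ((n + r).factorial : ℂ) * (r : ℂ) ^ s))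
      atTop (𝓝 (riemannZeta s / (Real.sqrt Real.pi : ℂ))) := by
  have hs0 : s ≠ 0 := by rintro rfl; norm_num at hs
  obtain ⟨M, hM⟩ := exists_abs_sqrt_mul_choose_two_mul_div_four_pow_le
  have hsum : Summable fun r : ℕ => ‖1 / (r : ℂ) ^ s‖ :=
    summable_norm_iff.mpr (Complex.summable_one_div_nat_cpow.mpr hs)
  have hlim := tendsto_tsum_smul_of_tendsto_of_abs_le hsum
    tendsto_sqrt_mul_choose_two_mul_add_div_four_pow (fun n r => hM n (n + r))
  rw [← zeta_eq_tsum_one_div_nat_cpow hs, Complex.real_smul] at hlim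
  simp_rw [sqrt_mul_factorial_div_four_pow_mul_sum_eq_tsum hs0]
  convert hlim using 2
  push_cast
  ring
end
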